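/- The adjoint polynomial is of exponential type: for every finite simple graph G = (V,E) and all x, y, Σ_{S ⊆ V} h(G[S], x) · h(G[V∖S], y) = h(G, x + y), where the sum is over all subsets S of V and h of the empty graph is 1. -/

import Mathlib

/-!
Writing `h(G[S], x) = (-1)^|S| ∑_P (-x)^|P|` over the clique partitions `P` of `S`, the left
side becomes `(-1)^|V|` times a sum of `(-x)^|P₁| (-y)^|P₂|` over all `S` and all pairs of
clique partitions `P₁` of `S` and `P₂` of `V ∖ S`. Such triples correspond bijectively to a
clique partition `P = P₁ ∪ P₂` of `V` together with the subfamily `P₁ ⊆ P`, so the binomial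
theorem collapses the sum to `(-1)^|V| ∑_P (-x - y)^|P| = h(G, x + y)`.
-/

open scoped Classical

noncomputable section

/-- The collection of (unordered) partitions of the finite set `S` into exactly `k`
nonempty parts, encoded as finsets of pairwise disjoint nonempty finsets whose union
is `S`. -/
def partitionsInto {V : Type*} [Fintype V] (S : Finset V) (k : ℕ) :
    Finset (Finset (Finset V)) :=
  Finset.univ.filter (fun P : Finset (Finset V) =>
    P.card = k ∧ (∀ T ∈ P, T.Nonempty) ∧
      (P : Set (Finset V)).PairwiseDisjoint id ∧ P.sup id = S)

/-- `a_k(G)`: the number of partitions of the vertex set of `G` into exactly `k`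
nonempty parts, each of which induces a clique of `G`. -/
def cliquePartCount {V : Type*} [Fintype V] (G : SimpleGraph V) (k : ℕ) : ℕ :=
  ((partitionsInto (Finset.univ : Finset V) k).filter
    (fun P => ∀ T : Finset V, T ∈ P → G.IsClique (↑T : Set V))).card

/-- The adjoint polynomial (with alternating signs)
`h(G,x) = ∑_{k=1}^n (-1)^{n-k} a_k(G) x^k`; the `k = 0` term is nonzero only for the
empty graph, where it realizes the convention `h(∅) = 1`. -/
def adjointPoly {V : Type*} [Fintype V] (G : SimpleGraph V) (x : ℂ) : ℂ :=
  ∑ k ∈ Finset.range (Fintype.card V + 1),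
    (-1 : ℂ) ^ (Fintype.card V - k) * (cliquePartCount G k : ℂ) * x ^ k

open Finset

lemma neg_one_pow_sub_mul_pow {R : Type*} [CommRing R] {n k : ℕ} (h : k ≤ n) (x : R) :
    (-1) ^ (n - k) * x ^ k = (-1) ^ n * (-x) ^ k := by
  obtain ⟨m, rfl⟩ := Nat.exists_eq_add_of_le h
  have hk : ((-1 : R) ^ k) * (-1) ^ k = 1 := by rw [← mul_pow]; simp
  rw [Nat.add_sub_cancel_left, neg_pow x, pow_add]
  linear_combination (-(-1) ^ m * x ^ k) * hk

section CliquePartitions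

variable {V W : Type*}

structure IsCliquePartition (G : SimpleGraph V) (S : Finset V) (P : Finset (Finset V)) :
    Prop where
  nonempty : ∀ T ∈ P, T.Nonempty
  pairwiseDisjoint : (P : Set (Finset V)).PairwiseDisjoint id
  sup_eq : P.sup id = S
  isClique : ∀ T ∈ P, G.IsClique (T : Set V)

lemma isCliquePartition_iff {G : SimpleGraph V} {S : Finset V} {P : Finset (Finset V)} :
    IsCliquePartition G S P ↔ (∀ T ∈ P, T.Nonempty) ∧
      (P : Set (Finset V)).PairwiseDisjoint id ∧ P.sup id = S ∧
      ∀ T ∈ P, G.IsClique (T : Set V) :=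
  ⟨fun h => ⟨h.1, h.2, h.3, h.4⟩, fun ⟨h₁, h₂, h₃, h₄⟩ => ⟨h₁, h₂, h₃, h₄⟩⟩

namespace IsCliquePartition

variable {G : SimpleGraph V} {S S' : Finset V} {P Q : Finset (Finset V)}

lemma subset (h : IsCliquePartition G S P) {T : Finset V} (hT : T ∈ P) : T ⊆ S :=
  h.sup_eq ▸ le_sup (f := id) hT

lemma card_le (h : IsCliquePartition G S P) : #P ≤ #S :=
  calc #P = ∑ T ∈ P, 1 := card_eq_sum_ones P
    _ ≤ ∑ T ∈ P, #T := sum_le_sum fun T hT => card_pos.2 (h.nonempty T hT)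
    _ = #(P.biUnion id) := (card_biUnion h.pairwiseDisjoint).symm
    _ = #S := by rw [← sup_eq_biUnion, h.sup_eq]

lemma of_subset (h : IsCliquePartition G S P) (hQ : Q ⊆ P) :
    IsCliquePartition G (Q.sup id) Q where
  nonempty T hT := h.nonempty T (hQ hT)
  pairwiseDisjoint := h.pairwiseDisjoint.subset (by exact_mod_cast hQ)
  sup_eq := rfl
  isClique T hT := h.isClique T (hQ hT)

lemma sdiff (h : IsCliquePartition G S P) (hQ : Q ⊆ P) :
    IsCliquePartition G (S \ Q.sup id) (P \ Q) := by
  have hdisj : Disjoint (Q.sup id) ((P \ Q).sup id) :=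
    Finset.disjoint_sup_left.2 fun A hA => Finset.disjoint_sup_right.2 fun B hB =>
      h.pairwiseDisjoint (hQ hA) (sdiff_subset hB) fun hAB => (mem_sdiff.1 hB).2 (hAB ▸ hA)
  have hS : S = Q.sup id ∪ (P \ Q).sup id := by
    rw [← sup_eq_union, ← sup_union, union_sdiff_of_subset hQ, h.sup_eq]
  have hsup : (P \ Q).sup id = S \ Q.sup id := by
    rw [hS, union_sdiff_cancel_left hdisj]
  exact hsup ▸ h.of_subset sdiff_subset

lemma disjoint (h : IsCliquePartition G S P) (h' : IsCliquePartition G S' Q)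
    (hS : Disjoint S S') : Disjoint P Q :=
  disjoint_left.2 fun T hP hQ =>
    have ⟨_, hv⟩ := h.nonempty T hP
    disjoint_left.1 hS (h.subset hP hv) (h'.subset hQ hv)

lemma union (h : IsCliquePartition G S P) (h' : IsCliquePartition G S' Q)
    (hS : Disjoint S S') : IsCliquePartition G (S ∪ S') (P ∪ Q) where
  nonempty T hT := (mem_union.1 hT).elim (h.nonempty T) (h'.nonempty T)
  pairwiseDisjoint := by
    rw [coe_union, Set.pairwiseDisjoint_union]
    exact ⟨h.pairwiseDisjoint, h'.pairwiseDisjoint, fun A hA B hB _ =>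
      hS.mono (h.subset hA) (h'.subset hB)⟩
  sup_eq := by rw [sup_union, h.sup_eq, h'.sup_eq]; rfl
  isClique T hT := (mem_union.1 hT).elim (h.isClique T) (h'.isClique T)

lemma map_iff (f : W ↪ V) {S : Finset W} {P : Finset (Finset W)} :
    IsCliquePartition G (S.map f) (P.map (mapEmbedding f).toEmbedding)
      ↔ IsCliquePartition (G.comap f) S P := by
  have hsup : (P.sup id).map f = P.sup (map f) :=
    apply_sup_eq_sup_comp (map f) (fun _ _ => map_union _ _) (map_empty f)
  rw [isCliquePartition_iff, isCliquePartition_iff, forall_mem_map, forall_mem_map, coe_map,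
    (mapEmbedding f).toEmbedding.injective.injOn.pairwiseDisjoint_image, sup_map]
  refine and_congr (by simp) (and_congr ?_ (and_congr ?_ ?_))
  · simp [Set.PairwiseDisjoint, Set.Pairwise, Function.onFun]
  · rw [← map_inj (f := f), hsup]; rfl
  · refine forall₂_congr fun T _ => ?_
    change G.IsClique (T.map f : Set V) ↔ _
    rw [coe_map]
    exact f.injective.injOn.pairwise_image

end IsCliquePartition

variable [Fintype V] [Fintype W]

def cliquePartitions (G : SimpleGraph V) (S : Finset V) : Finset (Finset (Finset V)) :=
  {P | IsCliquePartition G S P}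

lemma mem_cliquePartitions {G : SimpleGraph V} {S : Finset V} {P : Finset (Finset V)} :
    P ∈ cliquePartitions G S ↔ IsCliquePartition G S P := by
  simp [cliquePartitions]

lemma sum_cliquePartitions_comap {M : Type*} [AddCommMonoid M] (f : W ↪ V)
    (G : SimpleGraph V) (S : Finset W) (g : ℕ → M) :
    ∑ P ∈ cliquePartitions (G.comap f) S, g #P = ∑ P ∈ cliquePartitions G (S.map f), g #P := by
  refine sum_nbij (·.map (mapEmbedding f).toEmbedding) (fun P hP => ?_)
    (map_injective _).injOn (fun P hP => ?_) (fun P _ => by rw [card_map])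
  · exact mem_cliquePartitions.2 ((IsCliquePartition.map_iff f).2 (mem_cliquePartitions.1 hP))
  · have hP := mem_cliquePartitions.1 hP
    have hsub : P ⊆ S.powerset.map (mapEmbedding f).toEmbedding := fun T hT => by
      obtain ⟨U, hU, rfl⟩ := subset_map_iff.1 (hP.subset hT)
      exact mem_map_of_mem _ (mem_powerset.2 hU)
    obtain ⟨Q, -, rfl⟩ := subset_map_iff.1 hsub
    exact ⟨Q, mem_cliquePartitions.2 ((IsCliquePartition.map_iff f).1 hP), rfl⟩

lemma cliquePartCount_eq_card (G : SimpleGraph V) (k : ℕ) :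
    cliquePartCount G k = #{P ∈ cliquePartitions G univ | #P = k} := by
  rw [cliquePartCount]
  congr 1
  ext P
  simp only [partitionsInto, mem_filter, mem_univ, true_and, mem_cliquePartitions,
    isCliquePartition_iff]
  tauto

lemma adjointPoly_eq_sum (G : SimpleGraph V) (x : ℂ) :
    adjointPoly G x = (-1) ^ Fintype.card V * ∑ P ∈ cliquePartitions G univ, (-x) ^ #P := by
  rw [adjointPoly, mul_sum, ← sum_fiberwise_of_maps_to (g := card)
    (t := range (Fintype.card V + 1)) fun P hP => mem_range.2 <|
      Nat.lt_succ_of_le ((mem_cliquePartitions.1 hP).card_le.trans_eq card_univ)]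
  refine sum_congr rfl fun k hk => ?_
  rw [sum_congr rfl fun P hP => by rw [(mem_filter.1 hP).2], sum_const, nsmul_eq_mul,
    cliquePartCount_eq_card, mul_right_comm,
    neg_one_pow_sub_mul_pow (Nat.le_of_lt_succ (mem_range.1 hk))]
  ring

lemma adjointPoly_induce (G : SimpleGraph V) (S : Finset V) (x : ℂ) :
    adjointPoly (G.induce (S : Set V)) x
      = (-1) ^ #S * ∑ P ∈ cliquePartitions G S, (-x) ^ #P := by
  have hS : univ.map (Function.Embedding.subtype (· ∈ (S : Set V))) = S := by ext; simp
  rw [adjointPoly_eq_sum, SimpleGraph.induce, sum_cliquePartitions_comap (g := ((-x) ^ ·)), hS]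
  simp

lemma sum_cliquePartitions_compl {M : Type*} [AddCommMonoid M] (G : SimpleGraph V)
    (F : Finset (Finset V) → Finset (Finset V) → M) :
    ∑ S : Finset V, ∑ P ∈ cliquePartitions G S, ∑ Q ∈ cliquePartitions G Sᶜ, F P Q
      = ∑ P ∈ cliquePartitions G univ, ∑ Q ∈ P.powerset, F Q (P \ Q) := by
  simp_rw [← sum_product' (f := F), sum_sigma']
  refine sum_nbij' (fun a => ⟨a.2.1 ∪ a.2.2, a.2.1⟩) (fun b => ⟨b.2.sup id, b.2, b.1 \ b.2⟩)
    ?_ ?_ ?_ ?_ ?_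
  all_goals simp only [mem_sigma, mem_product, mem_univ, true_and, mem_powerset,
    mem_cliquePartitions, and_imp, Sigma.forall, Prod.forall]
  · exact fun S P Q hP hQ =>
      ⟨union_compl S ▸ hP.union hQ disjoint_compl_right, subset_union_left⟩
  · exact fun P Q hP hQ => ⟨hP.of_subset hQ, compl_eq_univ_sdiff (Q.sup id) ▸ hP.sdiff hQ⟩
  · intro S P Q hP hQ
    rw [union_sdiff_cancel_left (hP.disjoint hQ disjoint_compl_right), hP.sup_eq]
  · intro P Q _ hQ
    rw [union_sdiff_of_subset hQ]
  · intro S P Q hP hQ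
    rw [union_sdiff_cancel_left (hP.disjoint hQ disjoint_compl_right)]

end CliquePartitions

/-- the adjoint polynomial is of exponential type:
`∑_{S ⊆ V} h(G[S],x) · h(G[V∖S],y) = h(G,x+y)`. -/
theorem adjointPoly_exponential_type {V : Type*} [Fintype V] (G : SimpleGraph V)
    (x y : ℂ) :
    ∑ S : Finset V,
        adjointPoly (G.induce (↑S : Set V)) x * adjointPoly (G.induce (↑(Sᶜ) : Set V)) y
      = adjointPoly G (x + y) := by
  simp_rw [adjointPoly_induce, adjointPoly_eq_sum]
  calc _ = (-1) ^ Fintype.card V * ∑ S : Finset V, ∑ P ∈ cliquePartitions G S,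
        ∑ Q ∈ cliquePartitions G Sᶜ, (-x) ^ #P * (-y) ^ #Q := by
        rw [mul_sum]
        refine sum_congr rfl fun S _ => ?_
        rw [mul_mul_mul_comm, sum_mul_sum, ← card_add_card_compl S, pow_add]
    _ = (-1) ^ Fintype.card V * ∑ P ∈ cliquePartitions G univ, ∑ Q ∈ P.powerset,
        (-x) ^ #Q * (-y) ^ (#P - #Q) := by
        rw [sum_cliquePartitions_compl]
        congr! 3 with P _ Q hQ
        rw [card_sdiff_of_subset (mem_powerset.1 hQ)]
    _ = _ := by simp_rw [sum_pow_mul_eq_add_pow, neg_add]
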